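/- Let (x_i, y_i) ∈ ℝ² × ℝ², i = 1,…,m, be given. Suppose there exist a finite camera P₂ = (A b), non-coincident with P₁ = (I 0), and points w_i ∈ ℝ³ such that P₁ŵ_i is a nonzero scalar multiple of x̂_i and P₂ŵ_i is a nonzero scalar multiple of ŷ_i for all i. Then there exists a real 3×3 matrix F of rank two with ŷ_iᵀ F x̂_i = 0 for all i, together with a nonzero vector e₂ ∈ ker(Fᵀ), such that each (x_i,y_i) is ([e₂]_× F, e₂)-regular; indeed F = [b]_× A and e₂ = b have these properties. -/

import Mathlib

open Matrix

noncomputable section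

/-- For `u ∈ ℝⁿ`, `hat u = (u, 1)ᵀ ∈ ℝⁿ⁺¹`. -/
def hat {n : ℕ} (u : Fin n → ℝ) : Fin (n + 1) → ℝ := Fin.snoc u 1

/-- The 3×4 matrix `(A b)` with left 3×3 block `A` and last column `b`. -/
def cam (A : Matrix (Fin 3) (Fin 3) ℝ) (b : Fin 3 → ℝ) : Matrix (Fin 3) (Fin 4) ℝ :=
  Matrix.of fun i => Fin.snoc (A i) (b i)

/-- The left 3×3 block of a 3×4 matrix. -/
def leftBlock (P : Matrix (Fin 3) (Fin 4) ℝ) : Matrix (Fin 3) (Fin 3) ℝ :=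
  P.submatrix id Fin.castSucc

/-- A (projective) camera is a real 3×4 matrix of rank 3. -/
def IsCamera (P : Matrix (Fin 3) (Fin 4) ℝ) : Prop := P.rank = 3

/-- A finite camera: the left 3×3 block is nonsingular. -/
def IsFiniteCamera (P : Matrix (Fin 3) (Fin 4) ℝ) : Prop := IsUnit (leftBlock P).det

/-- Two cameras are coincident if their camera centers agree up to a nonzero scale;
for rank-3 cameras the center is the (one-dimensional) kernel, so this says the two
cameras share a common nonzero kernel vector. -/
def Coincident (P Q : Matrix (Fin 3) (Fin 4) ℝ) : Prop :=
  ∃ c : Fin 4 → ℝ, c ≠ 0 ∧ P.mulVec c = 0 ∧ Q.mulVec c = 0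

/-- `u` is a nonzero scalar multiple of `v`. -/
def SimEq {n : ℕ} (u v : Fin n → ℝ) : Prop := ∃ c : ℝ, c ≠ 0 ∧ u = c • v

/-- The skew-symmetric matrix `[v]ₓ` with `[v]ₓ w = v × w`. -/
def skew (v : Fin 3 → ℝ) : Matrix (Fin 3) (Fin 3) ℝ :=
  !![0, -v 2, v 1; v 2, 0, -v 0; -v 1, v 0, 0]

/-- `(x, y)` is `(A, b)`-irregular. -/
def Irregular (A : Matrix (Fin 3) (Fin 3) ℝ) (b : Fin 3 → ℝ) (x y : Fin 2 → ℝ) : Prop :=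
  ((skew b * A).mulVec (hat x) = 0 ∧ Matrix.vecMul (hat y) (skew b) ≠ 0) ∨
  ((skew b * A).mulVec (hat x) ≠ 0 ∧ Matrix.vecMul (hat y) (skew b) = 0)

/-!
From `wᵢ = c x̂ᵢ` and `A wᵢ + b = d ŷᵢ`, applying `[b]ₓ` (which kills `b`) gives
`[b]ₓ A x̂ᵢ = (d / c) (b × ŷᵢ)`. This vector is orthogonal to `ŷᵢ`, which is the epipolar
constraint, and `bᵀ [b]ₓ = 0` puts `b` in the left kernel. Since `v ⬝ (b × (b × v)) = -|b × v|²`,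
`[b]ₓ` is injective on its own image, so `[b]ₓ² [b]ₓ A x̂ᵢ` vanishes exactly when `b × ŷᵢ`,
equivalently `ŷᵢᵀ [b]ₓ`, does: every pair is regular. Finally `ker [b]ₓ = ℝ b`, so `[b]ₓ A` has
rank two.
-/

lemma skew_mulVec (v w : Fin 3 → ℝ) : skew v *ᵥ w = v ⨯₃ w := by
  ext i
  fin_cases i <;> simp [skew, mulVec, dotProduct, Fin.sum_univ_three, cross_apply] <;> ring

lemma vecMul_skew (v w : Fin 3 → ℝ) : w ᵥ* skew v = w ⨯₃ v := by
  ext i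
  fin_cases i <;> simp [skew, vecMul, dotProduct, Fin.sum_univ_three, cross_apply] <;> ring

lemma mulVecLin_skew (v : Fin 3 → ℝ) : (skew v).mulVecLin = crossProduct v :=
  LinearMap.ext (skew_mulVec v)

lemma cam_mulVec_hat (A : Matrix (Fin 3) (Fin 3) ℝ) (b u : Fin 3 → ℝ) :
    cam A b *ᵥ hat u = A *ᵥ u + b := by
  ext i
  simp only [cam, hat, mulVec, dotProduct, Fin.sum_univ_castSucc, of_apply, Fin.snoc_castSucc,
    Fin.snoc_last, mul_one, Pi.add_apply]

lemma crossProduct_eq_zero_iff {K : Type*} [Field K] {b v : Fin 3 → K} (hb : b ≠ 0) :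
    b ⨯₃ v = 0 ↔ ∃ a : K, a • b = v := by
  rw [← not_iff_not, ← ne_eq, crossProduct_ne_zero_iff_linearIndependent,
    LinearIndependent.pair_iff' hb, not_exists]

lemma ker_crossProduct {K : Type*} [Field K] {b : Fin 3 → K} (hb : b ≠ 0) :
    LinearMap.ker (crossProduct b) = K ∙ b := by
  ext v
  rw [LinearMap.mem_ker, Submodule.mem_span_singleton, crossProduct_eq_zero_iff hb]

lemma rank_skew {b : Fin 3 → ℝ} (hb : b ≠ 0) : (skew b).rank = 2 := by
  have h := LinearMap.finrank_range_add_finrank_ker (crossProduct b)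
  rw [ker_crossProduct hb, finrank_span_singleton hb, Module.finrank_fin_fun] at h
  rw [Matrix.rank, mulVecLin_skew]
  omega

lemma dotProduct_cross_cross_self {R : Type*} [CommRing R] (b v : Fin 3 → R) :
    v ⬝ᵥ b ⨯₃ (b ⨯₃ v) = -(b ⨯₃ v ⬝ᵥ b ⨯₃ v) := by
  rw [triple_product_permutation, triple_product_permutation, ← dotProduct_neg, cross_anticomm]

lemma cross_cross_self_eq_zero_iff {R : Type*} [CommRing R] [LinearOrder R]
    [IsStrictOrderedRing R] {b v : Fin 3 → R} : b ⨯₃ (b ⨯₃ v) = 0 ↔ b ⨯₃ v = 0 := by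
  refine ⟨fun h => ?_, fun h => by rw [h, map_zero]⟩
  have h' := dotProduct_cross_cross_self b v
  rw [h, dotProduct_zero, eq_comm, neg_eq_zero] at h'
  exact dotProduct_self_eq_zero.mp h'

lemma exists_mulVec_eq_smul_cross_of_simEq {A : Matrix (Fin 3) (Fin 3) ℝ} {b w u v : Fin 3 → ℝ}
    (hu : SimEq (cam 1 0 *ᵥ hat w) u) (hv : SimEq (cam A b *ᵥ hat w) v) :
    ∃ k : ℝ, k ≠ 0 ∧ (skew b * A) *ᵥ u = k • b ⨯₃ v := by
  obtain ⟨c, hc, hwu⟩ := hu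
  obtain ⟨d, hd, hwv⟩ := hv
  rw [cam_mulVec_hat, one_mulVec, add_zero] at hwu
  rw [cam_mulVec_hat] at hwv
  have hAw : A *ᵥ w = d • v - b := eq_sub_of_add_eq hwv
  refine ⟨c⁻¹ * d, mul_ne_zero (inv_ne_zero hc) hd, ?_⟩
  calc (skew b * A) *ᵥ u = c⁻¹ • b ⨯₃ (A *ᵥ w) := by
        rw [← mulVec_mulVec, skew_mulVec, hwu, mulVec_smul, map_smul, smul_smul,
          inv_mul_cancel₀ hc, one_smul]
    _ = (c⁻¹ * d) • b ⨯₃ v := by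
        rw [hAw, map_sub, map_smul, cross_self, sub_zero, smul_smul]

lemma not_irregular_of_mulVec_eq_smul_cross {A : Matrix (Fin 3) (Fin 3) ℝ} {b : Fin 3 → ℝ}
    {x y : Fin 2 → ℝ} {k : ℝ} (hk : k ≠ 0) (h : (skew b * A) *ᵥ hat x = k • b ⨯₃ hat y) :
    ¬ Irregular (skew b * (skew b * A)) b x y := by
  have hx : (skew b * (skew b * (skew b * A))) *ᵥ hat x = 0 ↔ b ⨯₃ hat y = 0 := by
    simp only [← mulVec_mulVec, h, skew_mulVec, map_smul, smul_eq_zero, hk, false_or,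
      cross_cross_self_eq_zero_iff]
  have hy : hat y ᵥ* skew b = 0 ↔ b ⨯₃ hat y = 0 := by
    rw [vecMul_skew, ← cross_anticomm, neg_eq_zero]
  rw [Irregular, hx, hy]
  tauto

/-- From a finite reconstruction with non-coincident cameras `(I 0)` and `(A b)`, the
matrix `F = [b]ₓ A` is a fundamental matrix, `e₂ = b` is a nonzero left-kernel vector of
`F`, and every point pair is `([e₂]ₓ F, e₂)`-regular. -/
theorem stmt13 (m : ℕ) (x y : Fin m → Fin 2 → ℝ)
    (A : Matrix (Fin 3) (Fin 3) ℝ) (b : Fin 3 → ℝ)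
    (hA : IsUnit A.det) (hb : b ≠ 0)
    (w : Fin m → Fin 3 → ℝ)
    (hrec : ∀ i, SimEq ((cam 1 0).mulVec (hat (w i))) (hat (x i)) ∧
                 SimEq ((cam A b).mulVec (hat (w i))) (hat (y i))) :
    (skew b * A).rank = 2 ∧
    (∀ i, hat (y i) ⬝ᵥ (skew b * A).mulVec (hat (x i)) = 0) ∧
    (skew b * A)ᵀ.mulVec b = 0 ∧
    (∀ i, ¬ Irregular (skew b * (skew b * A)) b (x i) (y i)) := by
  have epipolar i := exists_mulVec_eq_smul_cross_of_simEq (hrec i).1 (hrec i).2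
  refine ⟨?_, fun i => ?_, ?_, fun i => ?_⟩
  · rw [rank_mul_eq_left_of_isUnit_det A _ hA, rank_skew hb]
  · obtain ⟨k, -, hk⟩ := epipolar i
    rw [hk, dotProduct_smul, dot_cross_self, smul_zero]
  · rw [mulVec_transpose, ← vecMul_vecMul, vecMul_skew, cross_self, zero_vecMul]
  · obtain ⟨k, hk, h⟩ := epipolar i
    exact not_irregular_of_mulVec_eq_smul_cross hk h
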